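/- Let H be a weak Hopf algebra and A a left H-module algebra. Then the smash product A#H is a left H*-module algebra via φ·(a#h) = a#(φ⇀h), where φ⇀h = h₁⟨φ, h₂⟩. -/

import Mathlib

open TensorProduct

/-- A weak Hopf algebra structure on a `k`-algebra `H` (Böhm–Nill–Szlachányi axioms). -/
structure WeakHopfAlgebra (k : Type*) [Field k] (H : Type*) [Ring H] [Algebra k H] where
  Δ : H →ₗ[k] H ⊗[k] H
  ε : H →ₗ[k] k
  S : H →ₗ[k] H
  /-- Δ is multiplicative -/
  Δ_mul : ∀ h g : H, Δ (h * g) = Δ h * Δ g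
  /-- coassociativity -/
  coassoc : ∀ h : H, (TensorProduct.assoc k H H H) ((Δ.rTensor H) (Δ h)) = (Δ.lTensor H) (Δ h)
  /-- counit axioms -/
  counit_left : ∀ h : H, (TensorProduct.lid k H) ((ε.rTensor H) (Δ h)) = h
  counit_right : ∀ h : H, (TensorProduct.rid k H) ((ε.lTensor H) (Δ h)) = h
  /-- weak multiplicativity of the counit -/
  weak_counit₁ : ∀ h g f : H,
    ε (h * g * f) = (LinearMap.mul' k k)
      ((TensorProduct.map (ε ∘ₗ LinearMap.mulLeft k h) (ε ∘ₗ LinearMap.mulRight k f)) (Δ g))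
  weak_counit₂ : ∀ h g f : H,
    ε (h * g * f) = (LinearMap.mul' k k)
      ((TensorProduct.map (ε ∘ₗ LinearMap.mulRight k f) (ε ∘ₗ LinearMap.mulLeft k h))
        ((TensorProduct.comm k H H) (Δ g)))
  /-- weak comultiplicativity of the unit -/
  weak_unit₁ : (Δ.rTensor H) (Δ 1) =
    (Δ 1 ⊗ₜ[k] (1 : H)) * ((TensorProduct.assoc k H H H).symm ((1 : H) ⊗ₜ[k] Δ 1))
  weak_unit₂ : (Δ.rTensor H) (Δ 1) =
    ((TensorProduct.assoc k H H H).symm ((1 : H) ⊗ₜ[k] Δ 1)) * (Δ 1 ⊗ₜ[k] (1 : H))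
  /-- antipode axioms: h₁S(h₂) = ε_t(h), S(h₁)h₂ = ε_s(h), S(h₁)h₂S(h₃) = S(h) -/
  antipode_right : ∀ h : H, (LinearMap.mul' k H) ((S.lTensor H) (Δ h)) =
    (TensorProduct.lid k H) ((ε.rTensor H) (Δ 1 * (h ⊗ₜ[k] 1)))
  antipode_left : ∀ h : H, (LinearMap.mul' k H) ((S.rTensor H) (Δ h)) =
    (TensorProduct.rid k H) ((ε.lTensor H) (((1 : H) ⊗ₜ[k] h) * Δ 1))
  antipode_mid : ∀ h : H, (LinearMap.mul' k H)
      ((LinearMap.lTensor H ((LinearMap.mul' k H) ∘ₗ (S.lTensor H)))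
        ((S.rTensor (H ⊗[k] H)) ((Δ.lTensor H) (Δ h)))) = S h

namespace WeakHopfAlgebra

variable {k : Type*} [Field k] {H : Type*} [Ring H] [Algebra k H]

/-- the target counital map ε_t(h) = (ε⊗id)(Δ(1)(h⊗1)) -/
noncomputable def εtL (W : WeakHopfAlgebra k H) : H →ₗ[k] H :=
  (TensorProduct.lid k H).toLinearMap ∘ₗ W.ε.rTensor H ∘ₗ
    LinearMap.mulLeft k (W.Δ 1) ∘ₗ ((TensorProduct.mk k H H).flip 1)

/-- the source counital map ε_s(h) = (id⊗ε)((1⊗h)Δ(1)) -/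
noncomputable def εsL (W : WeakHopfAlgebra k H) : H →ₗ[k] H :=
  (TensorProduct.rid k H).toLinearMap ∘ₗ W.ε.lTensor H ∘ₗ
    LinearMap.mulRight k (W.Δ 1) ∘ₗ (TensorProduct.mk k H H 1)

end WeakHopfAlgebra
namespace WeakHopfAlgebra

variable {k : Type*} [Field k] {H : Type*} [Ring H] [Algebra k H]
variable {A : Type*} [Ring A] [Algebra k A]

/-- A left `H`-module algebra structure on `A`: an `H`-module action `act` such that
`h·(xy) = (h₁·x)(h₂·y)` and `h·1 = ε_t(h)·1`. -/
structure ModuleAlgebra (W : WeakHopfAlgebra k H) (A : Type*) [Ring A] [Algebra k A] where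
  act : H →ₗ[k] A →ₗ[k] A
  act_one : ∀ x : A, act 1 x = x
  act_mul : ∀ (h g : H) (x : A), act (h * g) x = act h (act g x)
  /-- h·(xy) = (h₁·x)(h₂·y) -/
  act_algebra : ∀ (h : H) (x y : A), act h (x * y) =
    (LinearMap.mul' k A) ((TensorProduct.map (act.flip x) (act.flip y)) (W.Δ h))
  /-- h·1 = ε_t(h)·1 -/
  act_unit : ∀ h : H, act h 1 = act (W.εtL h) 1

variable (W : WeakHopfAlgebra k H)

/-- The relations defining `A ⊗_{H_t} H` inside `A ⊗_k H` : `x·z ⊗ h - x ⊗ zh`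
for `z ∈ H_t`, where `x·z = x(z·1)`. -/
noncomputable def smashRel (M : ModuleAlgebra W A) : Submodule k (A ⊗[k] H) :=
  Submodule.span k {u | ∃ (x : A) (z h : H), W.εtL z = z ∧
    u = (x * M.act z 1) ⊗ₜ[k] h - x ⊗ₜ[k] (z * h)}

/-- The underlying vector space of the smash product `A # H = A ⊗_{H_t} H`. -/
noncomputable def Smash (M : ModuleAlgebra W A) := (A ⊗[k] H) ⧸ smashRel W M

noncomputable instance (M : ModuleAlgebra W A) : AddCommGroup (Smash W M) :=
  inferInstanceAs (AddCommGroup ((A ⊗[k] H) ⧸ smashRel W M))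

noncomputable instance (M : ModuleAlgebra W A) : Module k (Smash W M) :=
  inferInstanceAs (Module k ((A ⊗[k] H) ⧸ smashRel W M))

/-- The class `x # h` of `x ⊗ h` in the smash product. -/
noncomputable def smashMk (M : ModuleAlgebra W A) : A ⊗[k] H →ₗ[k] Smash W M :=
  (smashRel W M).mkQ

/-- The map `(x ⊗ h) ⊗ (y ⊗ g) ↦ x(h₁·y) ⊗ h₂g` on `(A ⊗ H) ⊗ (A ⊗ H)`. -/
noncomputable def smashMulAux (M : ModuleAlgebra W A) :
    (A ⊗[k] H) ⊗[k] (A ⊗[k] H) →ₗ[k] A ⊗[k] H :=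
  LinearMap.rTensor H (LinearMap.mul' k A) ∘ₗ
  (TensorProduct.assoc k A A H).symm.toLinearMap ∘ₗ
  LinearMap.lTensor A (LinearMap.rTensor H (TensorProduct.lift M.act)) ∘ₗ
  LinearMap.lTensor A (TensorProduct.assoc k H A H).symm.toLinearMap ∘ₗ
  (TensorProduct.assoc k A H (A ⊗[k] H)).toLinearMap ∘ₗ
  (TensorProduct.tensorTensorTensorComm k A A H H).toLinearMap ∘ₗ
  LinearMap.lTensor (A ⊗[k] A) (LinearMap.lTensor H (LinearMap.mul' k H)) ∘ₗ
  LinearMap.lTensor (A ⊗[k] A) (TensorProduct.assoc k H H H).toLinearMap ∘ₗ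
  LinearMap.lTensor (A ⊗[k] A) (LinearMap.rTensor H W.Δ) ∘ₗ
  (TensorProduct.tensorTensorTensorComm k A H A H).toLinearMap

/-- `μ` is the multiplication of the smash product `A # H`:
`(x#h)(y#g) = x(h₁·y) # h₂g`. -/
noncomputable def IsSmashMul (M : ModuleAlgebra W A)
    (μ : Smash W M →ₗ[k] Smash W M →ₗ[k] Smash W M) : Prop :=
  ∀ u v : A ⊗[k] H, μ (smashMk W M u) (smashMk W M v) =
    smashMk W M (smashMulAux W M (u ⊗ₜ[k] v))

/-- The unit `1 # 1` of the smash product. -/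
noncomputable def smashOne (M : ModuleAlgebra W A) : Smash W M :=
  smashMk W M ((1 : A) ⊗ₜ[k] (1 : H))

/-- The left action `φ ⇀ h = h₁⟨φ, h₂⟩` of `H^*` on `H`. -/
noncomputable def coact (φ : Module.Dual k H) : H →ₗ[k] H :=
  (TensorProduct.rid k H).toLinearMap ∘ₗ (LinearMap.lTensor H φ) ∘ₗ W.Δ

/-- The convolution product on `H^*`: `⟨φψ, h⟩ = ⟨φ ⊗ ψ, Δ h⟩`. -/
noncomputable def dmul (φ ψ : Module.Dual k H) : Module.Dual k H :=
  (LinearMap.mul' k k) ∘ₗ (TensorProduct.map φ ψ) ∘ₗ W.Δ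

/-- The target counital map of the dual weak Hopf algebra `H^*`:
`⟨ε_t^*(φ), h⟩ = Σ ε(1₁h) φ(1₂)`. -/
noncomputable def dualEt (φ : Module.Dual k H) : Module.Dual k H :=
  (LinearMap.mul' k k) ∘ₗ (TensorProduct.map W.ε φ) ∘ₗ
    LinearMap.mulLeft k (W.Δ 1) ∘ₗ ((TensorProduct.mk k H H).flip 1)

/-- The comultiplication of `H^*`, dual to the multiplication of `H`. -/
noncomputable def comulD (_W : WeakHopfAlgebra k H) [FiniteDimensional k H] :
    Module.Dual k H →ₗ[k] Module.Dual k H ⊗[k] Module.Dual k H :=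
  (TensorProduct.dualDistribEquiv k H H).symm.toLinearMap ∘ₗ (LinearMap.mul' k H).dualMap

/-- The convolution product on `H^*` as a bilinear map. -/
noncomputable def dmulL : Module.Dual k H →ₗ[k] Module.Dual k H →ₗ[k] Module.Dual k H :=
  LinearMap.mk₂ k (dmul W)
    (by intros; ext; simp [dmul, TensorProduct.map_add_left])
    (by intros; ext; simp [dmul, TensorProduct.map_smul_left])
    (by intros; ext; simp [dmul, TensorProduct.map_add_right])
    (by intros; ext; simp [dmul, TensorProduct.map_smul_right])

/-- The action `φ ⇀ h` as a bilinear map. -/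
noncomputable def coactL : Module.Dual k H →ₗ[k] H →ₗ[k] H :=
  LinearMap.mk₂ k (fun φ h => coact W φ h)
    (fun φ φ' h => by simp [coact, LinearMap.lTensor_add])
    (fun c φ h => by simp [coact, LinearMap.lTensor_smul])
    (fun φ h h' => map_add _ _ _)
    (fun c φ h => map_smul _ _ _)

end WeakHopfAlgebra

namespace WeakHopfAlgebra

variable {k : Type*} [Field k] {H : Type*} [Ring H] [Algebra k H]
variable {A : Type*} [Ring A] [Algebra k A]
variable (W : WeakHopfAlgebra k H)

theorem coact_rep (φ : Module.Dual k H) (h : H) (s : Finset (H × H))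
    (hs : W.Δ h = ∑ p ∈ s, p.1 ⊗ₜ[k] p.2) :
    coact W φ h = ∑ p ∈ s, φ p.2 • p.1 := by
  simp [coact, hs]

theorem coact_counit (h : H) : coact W W.ε h = h := W.counit_right h

theorem coact_add (φ ψ : Module.Dual k H) :
    coact W (φ + ψ) = coact W φ + coact W ψ := by
  ext h; simp [coact, LinearMap.lTensor_add]

theorem coact_smul (c : k) (φ : Module.Dual k H) :
    coact W (c • φ) = c • coact W φ := by
  ext h; simp [coact, LinearMap.lTensor_smul]

theorem εtL_rep (h : H) (s : Finset (H × H))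
    (hs : W.Δ 1 = ∑ p ∈ s, p.1 ⊗ₜ[k] p.2) :
    W.εtL h = ∑ p ∈ s, W.ε (p.1 * h) • p.2 := by
  simp [εtL, hs, Finset.sum_mul, Algebra.TensorProduct.tmul_mul_tmul]

end WeakHopfAlgebra

namespace WeakHopfAlgebra

variable {k : Type*} [Field k] {H : Type*} [Ring H] [Algebra k H]
variable {A : Type*} [Ring A] [Algebra k A]
variable (W : WeakHopfAlgebra k H)

set_option maxHeartbeats 1000000
set_option synthInstance.maxHeartbeats 200000

theorem Δ_εtL (h : H) : W.Δ (W.εtL h) = (W.εtL h ⊗ₜ[k] (1 : H)) * W.Δ 1 := by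
  obtain ⟨s, hs⟩ := TensorProduct.exists_finset (W.Δ 1)
  -- key: (id ⊗ Δ)(Δ1) = Σ_{p,q} p.1 ⊗ (p.2 * q.1 ⊗ q.2)
  have key : (W.Δ.lTensor H) (W.Δ 1)
      = ∑ p ∈ s, ∑ q ∈ s, p.1 ⊗ₜ[k] ((p.2 * q.1) ⊗ₜ[k] q.2) := by
    rw [← W.coassoc 1, W.weak_unit₁]
    rw [hs]
    simp [TensorProduct.sum_tmul, TensorProduct.tmul_sum, Finset.sum_mul, Finset.mul_sum,
      Algebra.TensorProduct.tmul_mul_tmul]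
    rw [Finset.sum_comm]
  have happ := congrArg (fun t => (TensorProduct.lid k (H ⊗[k] H))
      ((LinearMap.rTensor (H ⊗[k] H) (W.ε ∘ₗ LinearMap.mulRight k h)) t)) key
  simp only [map_sum, LinearMap.rTensor_tmul, TensorProduct.lid_tmul, LinearMap.coe_comp,
    Function.comp_apply, LinearMap.mulRight_apply] at happ
  have hL : (TensorProduct.lid k (H ⊗[k] H))
      ((LinearMap.rTensor (H ⊗[k] H) (W.ε ∘ₗ LinearMap.mulRight k h)) ((W.Δ.lTensor H) (W.Δ 1)))
      = W.Δ (W.εtL h) := by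
    rw [εtL_rep W h s hs]
    conv_lhs => rw [hs]
    simp only [map_sum, LinearMap.lTensor_tmul, LinearMap.rTensor_tmul, TensorProduct.lid_tmul,
      LinearMap.coe_comp, Function.comp_apply, LinearMap.mulRight_apply, map_smul]
  rw [hL] at happ
  rw [happ, εtL_rep W h s hs]
  conv_rhs => rw [hs]
  rw [Finset.sum_comm, Finset.mul_sum]
  exact Finset.sum_congr rfl fun q _ => by
    simp [Algebra.TensorProduct.tmul_mul_tmul, Finset.sum_mul, smul_mul_assoc,
      TensorProduct.sum_tmul, TensorProduct.smul_tmul']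

theorem rid_lTensor_mulLeft (φ : Module.Dual k H) (z : H) (t : H ⊗[k] H) :
    (TensorProduct.rid k H) ((LinearMap.lTensor H φ) ((z ⊗ₜ[k] (1 : H)) * t))
      = z * (TensorProduct.rid k H) ((LinearMap.lTensor H φ) t) := by
  induction t using TensorProduct.induction_on with
  | zero => simp
  | tmul a b => simp [Algebra.TensorProduct.tmul_mul_tmul, mul_smul_comm]
  | add a b ha hb => simp [mul_add, ha, hb]

theorem coact_target_mul (φ : Module.Dual k H) (z h : H) (hz : W.εtL z = z) :
    coact W φ (z * h) = z * coact W φ h := by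
  have hΔz : W.Δ (z * h) = (z ⊗ₜ[k] (1 : H)) * W.Δ h := by
    rw [W.Δ_mul, ← hz, Δ_εtL, hz, mul_assoc, ← W.Δ_mul, one_mul]
  simp only [coact, LinearMap.coe_comp, Function.comp_apply, LinearEquiv.coe_coe, hΔz]
  exact rid_lTensor_mulLeft φ z (W.Δ h)

end WeakHopfAlgebra

namespace WeakHopfAlgebra

variable {k : Type*} [Field k] {H : Type*} [Ring H] [Algebra k H]
variable {A : Type*} [Ring A] [Algebra k A]
variable (W : WeakHopfAlgebra k H) (M : ModuleAlgebra W A)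

set_option maxHeartbeats 1000000
set_option synthInstance.maxHeartbeats 200000

theorem smashRel_le_ker (φ : Module.Dual k H) :
    smashRel W M ≤ LinearMap.ker (smashMk W M ∘ₗ LinearMap.lTensor A (coact W φ)) := by
  rw [smashRel, Submodule.span_le]
  rintro u ⟨x, z, h, hz, rfl⟩
  simp only [SetLike.mem_coe, LinearMap.mem_ker, LinearMap.coe_comp, Function.comp_apply,
    map_sub, LinearMap.lTensor_tmul]
  rw [coact_target_mul W φ z h hz, ← map_sub, smashMk]
  exact (Submodule.Quotient.mk_eq_zero _).2
    (Submodule.subset_span ⟨x, z, coact W φ h, hz, rfl⟩)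

noncomputable def PhiAux (φ : Module.Dual k H) : Smash W M →ₗ[k] Smash W M :=
  Submodule.liftQ _ (smashMk W M ∘ₗ LinearMap.lTensor A (coact W φ)) (smashRel_le_ker W M φ)

theorem PhiAux_mk (φ : Module.Dual k H) (u : A ⊗[k] H) :
    PhiAux W M φ (smashMk W M u) = smashMk W M (LinearMap.lTensor A (coact W φ) u) := rfl

noncomputable def Phi : Module.Dual k H →ₗ[k] Smash W M →ₗ[k] Smash W M where
  toFun := PhiAux W M
  map_add' φ ψ := by
    refine Submodule.linearMap_qext _ (TensorProduct.ext' fun x h => ?_)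
    show PhiAux W M (φ + ψ) (smashMk W M (x ⊗ₜ h)) =
      PhiAux W M φ (smashMk W M (x ⊗ₜ h)) + PhiAux W M ψ (smashMk W M (x ⊗ₜ h))
    simp only [PhiAux_mk, LinearMap.lTensor_tmul, coact_add, LinearMap.add_apply, ← map_add,
      TensorProduct.tmul_add]
  map_smul' c φ := by
    refine Submodule.linearMap_qext _ (TensorProduct.ext' fun x h => ?_)
    simp only [LinearMap.coe_comp, Function.comp_apply, Submodule.mkQ_apply, RingHom.id_apply,
      LinearMap.smul_apply]
    show PhiAux W M (c • φ) (smashMk W M (x ⊗ₜ h)) = c • PhiAux W M φ (smashMk W M (x ⊗ₜ h))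
    simp only [PhiAux_mk, LinearMap.lTensor_tmul, coact_smul, LinearMap.smul_apply, map_smul,
      TensorProduct.tmul_smul]

theorem Phi_mk (φ : Module.Dual k H) (x : A) (h : H) :
    Phi W M φ (smashMk W M (x ⊗ₜ[k] h)) = smashMk W M (x ⊗ₜ[k] coact W φ h) := rfl

theorem Phi_counit (s : Smash W M) : Phi W M W.ε s = s := by
  have : Phi W M W.ε = LinearMap.id := by
    refine Submodule.linearMap_qext _ (TensorProduct.ext' fun x h => ?_)
    show Phi W M W.ε (smashMk W M (x ⊗ₜ h)) = smashMk W M (x ⊗ₜ h)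
    rw [Phi_mk, coact_counit]
  rw [this]; rfl

theorem coact_dmul (φ ψ : Module.Dual k H) (h : H) :
    coact W (dmul W φ ψ) h = coact W φ (coact W ψ h) := by
  obtain ⟨s, hs⟩ := TensorProduct.exists_finset (W.Δ h)
  set F : H ⊗[k] (H ⊗[k] H) →ₗ[k] H :=
    (TensorProduct.rid k H).toLinearMap ∘ₗ
      LinearMap.lTensor H ((LinearMap.mul' k k) ∘ₗ (TensorProduct.map φ ψ)) with hFdef
  have hF1 : coact W (dmul W φ ψ) h = F ((W.Δ.lTensor H) (W.Δ h)) := by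
    rw [coact_rep W _ h s hs]
    conv_rhs => rw [hs]
    simp only [map_sum, LinearMap.lTensor_tmul, hFdef, LinearMap.coe_comp, Function.comp_apply,
      LinearEquiv.coe_coe, TensorProduct.rid_tmul, dmul]
  have hF2 : ∀ (t : H ⊗[k] H) (c : H),
      F ((TensorProduct.assoc k H H H) (t ⊗ₜ[k] c)) =
        ψ c • ((TensorProduct.rid k H) (LinearMap.lTensor H φ t)) := by
    intro t c
    induction t using TensorProduct.induction_on with
    | zero => simp
    | tmul a b =>
      simp [hFdef, TensorProduct.assoc_tmul, TensorProduct.map_tmul, smul_smul, mul_comm]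
    | add a b ha hb => simp [TensorProduct.add_tmul, ha, hb, smul_add]
  rw [hF1, ← W.coassoc h]
  conv_lhs => rw [hs]
  simp only [map_sum, LinearMap.rTensor_tmul]
  rw [coact_rep W ψ h s hs, map_sum]
  refine Finset.sum_congr rfl fun p _ => ?_
  rw [hF2 (W.Δ p.1) p.2, map_smul]
  rfl

theorem Phi_dmul (φ ψ : Module.Dual k H) (s : Smash W M) :
    Phi W M (dmul W φ ψ) s = Phi W M φ (Phi W M ψ s) := by
  have : Phi W M (dmul W φ ψ) = (Phi W M φ) ∘ₗ (Phi W M ψ) := by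
    refine Submodule.linearMap_qext _ (TensorProduct.ext' fun x h => ?_)
    show Phi W M (dmul W φ ψ) (smashMk W M (x ⊗ₜ h)) =
      Phi W M φ (Phi W M ψ (smashMk W M (x ⊗ₜ h)))
    rw [Phi_mk, Phi_mk, Phi_mk, coact_dmul]
  rw [this]; rfl

end WeakHopfAlgebra

namespace WeakHopfAlgebra

variable {k : Type*} [Field k] {H : Type*} [Ring H] [Algebra k H]
variable {A : Type*} [Ring A] [Algebra k A]
variable (W : WeakHopfAlgebra k H) (M : ModuleAlgebra W A)

set_option maxHeartbeats 1000000
set_option synthInstance.maxHeartbeats 200000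

theorem unit_rep_id (s : Finset (H × H)) (hs : W.Δ 1 = ∑ p ∈ s, p.1 ⊗ₜ[k] p.2) :
    ∑ p ∈ s, ∑ q ∈ s, W.ε (p.1 * q.2) • (q.1 ⊗ₜ[k] p.2) = W.Δ 1 := by
  have happ := congrArg
    (TensorProduct.map ((TensorProduct.rid k H).toLinearMap ∘ₗ LinearMap.lTensor H W.ε)
      (LinearMap.id (R := k) (M := H))) W.weak_unit₂
  -- LHS of happ
  have hL : (TensorProduct.map ((TensorProduct.rid k H).toLinearMap ∘ₗ LinearMap.lTensor H W.ε)
      (LinearMap.id (R := k) (M := H))) ((W.Δ.rTensor H) (W.Δ 1)) = W.Δ 1 := by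
    conv_lhs => rw [hs]
    simp only [map_sum, LinearMap.rTensor_tmul, TensorProduct.map_tmul, LinearMap.coe_comp,
      Function.comp_apply, LinearEquiv.coe_coe, LinearMap.id_apply]
    conv_rhs => rw [hs]
    exact Finset.sum_congr rfl fun q _ => by rw [W.counit_right q.1]
  rw [hL] at happ
  rw [happ]
  conv_rhs => rw [hs]
  simp only [TensorProduct.tmul_sum, TensorProduct.sum_tmul, map_sum, Finset.sum_mul,
    Finset.mul_sum, Algebra.TensorProduct.tmul_mul_tmul, one_mul, mul_one,
    TensorProduct.map_tmul, LinearMap.coe_comp, Function.comp_apply, LinearEquiv.coe_coe,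
    LinearMap.id_apply, LinearMap.lTensor_tmul, TensorProduct.rid_tmul, map_smul,
    TensorProduct.smul_tmul']
  rw [Finset.sum_comm]
  refine Finset.sum_congr rfl fun p _ => Finset.sum_congr rfl fun q _ => ?_
  simp [TensorProduct.assoc_symm_tmul, Algebra.TensorProduct.tmul_mul_tmul,
    TensorProduct.smul_tmul']

theorem coact_dualEt_one (φ : Module.Dual k H) :
    coact W (dualEt W φ) 1 = coact W φ 1 := by
  obtain ⟨s, hs⟩ := TensorProduct.exists_finset (W.Δ 1)
  have hdual : ∀ x : H, dualEt W φ x = ∑ q ∈ s, W.ε (q.1 * x) * φ q.2 := by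
    intro x
    simp [dualEt, hs, Finset.sum_mul, Algebra.TensorProduct.tmul_mul_tmul]
  have hid := congrArg
    ((TensorProduct.rid k H).toLinearMap ∘ₗ LinearMap.lTensor H φ) (unit_rep_id W s hs)
  simp only [map_sum, map_smul, LinearMap.coe_comp, Function.comp_apply, LinearEquiv.coe_coe,
    LinearMap.lTensor_tmul, TensorProduct.rid_tmul] at hid
  rw [coact_rep W _ 1 s hs]
  have : ∑ p ∈ s, dualEt W φ p.2 • p.1
      = ∑ p ∈ s, ∑ q ∈ s, W.ε (p.1 * q.2) • φ p.2 • q.1 := by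
    rw [Finset.sum_comm]
    refine Finset.sum_congr rfl fun p _ => ?_
    rw [hdual, Finset.sum_smul]
    exact Finset.sum_congr rfl fun q _ => by rw [mul_smul]
  rw [this, hid]
  simp [coact]

end WeakHopfAlgebra

namespace WeakHopfAlgebra

variable {k : Type*} [Field k] {H : Type*} [Ring H] [Algebra k H]
variable {A : Type*} [Ring A] [Algebra k A]
variable (W : WeakHopfAlgebra k H) (M : ModuleAlgebra W A)

set_option maxHeartbeats 1000000
set_option synthInstance.maxHeartbeats 200000

/-- `p ↦ x * (p · y)`. -/
noncomputable def LL (M : ModuleAlgebra W A) (x y : A) : H →ₗ[k] A :=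
  LinearMap.mulLeft k x ∘ₗ M.act.flip y

/-- `(c ⊗ d) ⊗ w ↦ (x * (c·y)) ⊗ (d * w)`. -/
noncomputable def SSm (M : ModuleAlgebra W A) (x y : A) : (H ⊗[k] H) ⊗[k] H →ₗ[k] A ⊗[k] H :=
  TensorProduct.map (LL W M x y) (LinearMap.mul' k H) ∘ₗ (TensorProduct.assoc k H H H).toLinearMap

theorem smashMulAux_tmul (x y : A) (p w : H) :
    smashMulAux W M ((x ⊗ₜ[k] p) ⊗ₜ[k] (y ⊗ₜ[k] w)) = SSm W M x y (W.Δ p ⊗ₜ[k] w) := by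
  obtain ⟨s, hs⟩ := TensorProduct.exists_finset (W.Δ p)
  rw [smashMulAux, SSm]
  simp only [hs, LinearMap.coe_comp, Function.comp_apply, LinearEquiv.coe_coe, map_sum,
    TensorProduct.tensorTensorTensorComm_tmul, LinearMap.lTensor_tmul, LinearMap.rTensor_tmul,
    TensorProduct.sum_tmul, TensorProduct.tmul_sum, TensorProduct.assoc_tmul,
    TensorProduct.assoc_symm_tmul, TensorProduct.map_tmul, LinearMap.mul'_apply,
    TensorProduct.lift.tmul, LL, LinearMap.mulLeft_apply, LinearMap.flip_apply]

theorem rid_lTensor_mul_tmul (φ : Module.Dual k H) (c d : H) (t : H ⊗[k] H) :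
    (TensorProduct.rid k H) ((LinearMap.lTensor H φ) (t * (c ⊗ₜ[k] d))) =
      (TensorProduct.rid k H)
        ((TensorProduct.map (LinearMap.mulRight k c) (φ ∘ₗ LinearMap.mulRight k d)) t) := by
  induction t using TensorProduct.induction_on with
  | zero => simp
  | tmul a b => simp [Algebra.TensorProduct.tmul_mul_tmul]
  | add a b ha hb => simp [add_mul, ha, hb]

/-- `B := Σ_q (c ⊗ d ↦ φ(d * q.2) • (c * q.1))`. -/
noncomputable def Bm (φ : Module.Dual k H) (t : Finset (H × H)) : H ⊗[k] H →ₗ[k] H :=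
  ∑ q ∈ t, (TensorProduct.rid k H).toLinearMap ∘ₗ
    TensorProduct.map (LinearMap.mulRight k q.1) (φ ∘ₗ LinearMap.mulRight k q.2)

theorem coact_mul_right (φ : Module.Dual k H) (g w : H) (t : Finset (H × H))
    (ht : W.Δ g = ∑ q ∈ t, q.1 ⊗ₜ[k] q.2) :
    coact W φ (w * g) = Bm (k := k) φ t (W.Δ w) := by
  simp only [coact, LinearMap.coe_comp, Function.comp_apply, LinearEquiv.coe_coe, W.Δ_mul, ht,
    Finset.mul_sum, map_sum, Bm, LinearMap.coe_sum, Finset.sum_apply]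
  exact Finset.sum_congr rfl fun q _ => rid_lTensor_mul_tmul φ q.1 q.2 (W.Δ w)

/-- `T1 : c ⊗ (d ⊗ r) ↦ mk ((x * (c·y)) ⊗ B(d ⊗ r))`. -/
noncomputable def T1m (M : ModuleAlgebra W A) (x y : A) (φ : Module.Dual k H)
    (t : Finset (H × H)) : H ⊗[k] (H ⊗[k] H) →ₗ[k] Smash W M :=
  smashMk W M ∘ₗ TensorProduct.map (LL W M x y) (Bm φ t)

end WeakHopfAlgebra

namespace WeakHopfAlgebra

variable {k : Type*} [Field k] {H : Type*} [Ring H] [Algebra k H]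
variable {A : Type*} [Ring A] [Algebra k A]
variable (W : WeakHopfAlgebra k H) (M : ModuleAlgebra W A)

set_option maxHeartbeats 1000000
set_option synthInstance.maxHeartbeats 200000

theorem comulD_rep_mul [FiniteDimensional k H] (φ : Module.Dual k H)
    (sD : Finset (Module.Dual k H × Module.Dual k H))
    (hΦ : comulD W φ = ∑ m ∈ sD, m.1 ⊗ₜ[k] m.2) (a b : H) :
    ∑ m ∈ sD, m.1 a * m.2 b = φ (a * b) := by
  have hD : (TensorProduct.dualDistribEquiv k H H).symm ((LinearMap.mul' k H).dualMap φ)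
      = ∑ m ∈ sD, m.1 ⊗ₜ[k] m.2 := hΦ
  have h1 := congrArg (TensorProduct.dualDistribEquiv k H H) hD
  rw [LinearEquiv.apply_symm_apply] at h1
  have h2 := congrArg (fun F => F (a ⊗ₜ[k] b)) h1
  simp only [map_sum, TensorProduct.dualDistribEquiv,
    TensorProduct.dualDistribEquivOfBasis_apply_apply,
    TensorProduct.homTensorHomMap_apply, TensorProduct.map_tmul, TensorProduct.lid_tmul,
    LinearMap.dualMap_apply, LinearMap.mul'_apply,
    LinearMap.coe_sum, Finset.sum_apply, smul_eq_mul] at h2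
  exact h2.symm

theorem Phi_mk' (φ : Module.Dual k H) (u : A ⊗[k] H) :
    Phi W M φ (smashMk W M u) = smashMk W M (LinearMap.lTensor A (coact W φ) u) := rfl

theorem Phi_mul [FiniteDimensional k H]
    (μ : Smash W M →ₗ[k] Smash W M →ₗ[k] Smash W M) (hμ : IsSmashMul W M μ)
    (φ : Module.Dual k H) (u v : A ⊗[k] H) :
    Phi W M φ (μ (smashMk W M u) (smashMk W M v)) =
      (TensorProduct.lift μ)
        ((TensorProduct.map ((Phi W M).flip (smashMk W M u)) ((Phi W M).flip (smashMk W M v)))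
          (comulD W φ)) := by
  obtain ⟨sD, hΦ⟩ := TensorProduct.exists_finset (comulD W φ)
  have hφmul : ∀ a b : H, ∑ m ∈ sD, m.1 a * m.2 b = φ (a * b) := comulD_rep_mul W φ sD hΦ
  rw [hΦ]
  simp only [map_sum, TensorProduct.map_tmul, TensorProduct.lift.tmul, LinearMap.flip_apply]
  induction u using TensorProduct.induction_on with
  | zero => simp
  | add u₁ u₂ h1 h2 =>
    simp only [map_add, LinearMap.add_apply, h1, h2, Finset.sum_add_distrib]
  | tmul x h =>
    induction v using TensorProduct.induction_on with
    | zero => simp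
    | add v₁ v₂ h1 h2 =>
      simp only [map_add, LinearMap.add_apply, map_add, h1, h2, Finset.sum_add_distrib]
    | tmul y g =>
      obtain ⟨s, hs⟩ := TensorProduct.exists_finset (W.Δ h)
      obtain ⟨t, ht⟩ := TensorProduct.exists_finset (W.Δ g)
      have claimL : ∀ tt : H ⊗[k] H,
          smashMk W M ((LinearMap.lTensor A (coact W φ)) (SSm W M x y (tt ⊗ₜ[k] g)))
            = T1m W M x y φ t ((W.Δ.lTensor H) tt) := by
        intro tt
        induction tt using TensorProduct.induction_on with
        | zero => simp
        | tmul p q =>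
          simp only [SSm, T1m, LinearMap.coe_comp, Function.comp_apply, LinearEquiv.coe_coe,
            TensorProduct.assoc_tmul, TensorProduct.map_tmul, LinearMap.mul'_apply,
            LinearMap.lTensor_tmul]
          rw [coact_mul_right W φ g q t ht]
        | add a b ha hb => simp only [TensorProduct.add_tmul, map_add, ha, hb]
      have claimR : ∀ (tt : H ⊗[k] H) (r : H),
          T1m W M x y φ t ((TensorProduct.assoc k H H H) (tt ⊗ₜ[k] r))
            = ∑ q ∈ t, φ (r * q.2) • smashMk W M (SSm W M x y (tt ⊗ₜ[k] q.1)) := by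
        intro tt r
        induction tt using TensorProduct.induction_on with
        | zero => simp
        | tmul c d =>
          simp only [SSm, T1m, Bm, LinearMap.coe_comp, Function.comp_apply, LinearEquiv.coe_coe,
            TensorProduct.assoc_tmul, TensorProduct.map_tmul, LinearMap.mul'_apply,
            LinearMap.coe_sum, Finset.sum_apply, LinearMap.mulRight_apply,
            TensorProduct.rid_tmul, TensorProduct.tmul_sum, TensorProduct.tmul_smul,
            map_sum, map_smul]
        | add a b ha hb => simp only [TensorProduct.add_tmul, map_add, ha, hb,
            Finset.sum_add_distrib, smul_add]
      have hR : ∀ m : Module.Dual k H × Module.Dual k H,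
          μ (Phi W M m.1 (smashMk W M (x ⊗ₜ[k] h))) (Phi W M m.2 (smashMk W M (y ⊗ₜ[k] g)))
            = ∑ p ∈ s, ∑ q ∈ t, (m.1 p.2 * m.2 q.2) •
                smashMk W M (SSm W M x y (W.Δ p.1 ⊗ₜ[k] q.1)) := by
        intro m
        rw [Phi_mk, Phi_mk, hμ]
        rw [coact_rep W m.1 h s hs, coact_rep W m.2 g t ht]
        simp only [TensorProduct.tmul_sum, TensorProduct.sum_tmul, TensorProduct.tmul_smul,
          ← TensorProduct.smul_tmul', map_sum, map_smul, smashMulAux_tmul, smul_smul]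
        simp only [Finset.smul_sum, smul_smul]
        rw [Finset.sum_comm]
        exact Finset.sum_congr rfl fun p _ => Finset.sum_congr rfl fun q _ => by rw [mul_comm]
      have hL2 : Phi W M φ (μ (smashMk W M (x ⊗ₜ[k] h)) (smashMk W M (y ⊗ₜ[k] g)))
          = ∑ p ∈ s, ∑ q ∈ t, φ (p.2 * q.2) •
              smashMk W M (SSm W M x y (W.Δ p.1 ⊗ₜ[k] q.1)) := by
        rw [hμ, smashMulAux_tmul, Phi_mk', claimL (W.Δ h), ← W.coassoc h]
        conv_lhs => rw [hs]
        simp only [map_sum, LinearMap.rTensor_tmul]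
        exact Finset.sum_congr rfl fun p _ => claimR (W.Δ p.1) p.2
      rw [hL2, Finset.sum_congr rfl fun m _ => hR m]
      conv_rhs => rw [Finset.sum_comm]
      refine Finset.sum_congr rfl fun p _ => ?_
      conv_rhs => rw [Finset.sum_comm]
      refine Finset.sum_congr rfl fun q _ => ?_
      rw [← Finset.sum_smul, hφmul]

end WeakHopfAlgebra


open WeakHopfAlgebra TensorProduct in
/-- The smash product `A # H` is a left `H^*`-module algebra via
`φ·(a#h) = a#(φ⇀h)`, where `φ⇀h = h₁⟨φ,h₂⟩`. -/
theorem smash_dual_module_algebra {k : Type*} [Field k] {H : Type*} [Ring H] [Algebra k H]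
    [FiniteDimensional k H] {A : Type*} [Ring A] [Algebra k A]
    (W : WeakHopfAlgebra k H) (M : ModuleAlgebra W A)
    (μ : Smash W M →ₗ[k] Smash W M →ₗ[k] Smash W M) (hμ : IsSmashMul W M μ) :
    ∃ Φ : Module.Dual k H →ₗ[k] Smash W M →ₗ[k] Smash W M,
      -- the defining formula φ·(a#h) = a#(φ⇀h)
      (∀ (a : A) (h : H) (φ : Module.Dual k H),
        Φ φ (smashMk W M (a ⊗ₜ[k] h)) = smashMk W M (a ⊗ₜ[k] coact W φ h)) ∧
      -- module axioms (the unit of H^* is ε, the product is convolution)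
      (∀ s : Smash W M, Φ W.ε s = s) ∧
      (∀ (φ ψ : Module.Dual k H) (s : Smash W M), Φ (dmul W φ ψ) s = Φ φ (Φ ψ s)) ∧
      -- module-algebra axiom: φ·(st) = (φ₁·s)(φ₂·t)
      (∀ (φ : Module.Dual k H) (u v : A ⊗[k] H),
        Φ φ (μ (smashMk W M u) (smashMk W M v)) =
          (TensorProduct.lift μ)
            ((TensorProduct.map (Φ.flip (smashMk W M u)) (Φ.flip (smashMk W M v)))
              (comulD W φ))) ∧
      -- unit axiom: φ·1 = ε_t^{H^*}(φ)·1
      (∀ φ : Module.Dual k H,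
        Φ φ (smashOne W M) = Φ (dualEt W φ) (smashOne W M)) := by
  refine ⟨Phi W M, ?_, Phi_counit W M, Phi_dmul W M, Phi_mul W M μ hμ, ?_⟩
  · intro a h φ
    exact Phi_mk W M φ a h
  · intro φ
    rw [smashOne, Phi_mk W M φ, Phi_mk W M (dualEt W φ), coact_dualEt_one]
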